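/- arXiv:1907.07848 — 3 statements merged into one kernel-verified Lean document; each statement's English description precedes it below -/
import Mathlib

section
/- (Welch–Rankin bound) Let d, n be positive integers with n > d ≥ 2, and let Φ = (φ_1, …, φ_n) be any family of unit vectors in 𝔽^d (𝔽 = ℝ or ℂ). Then μ(Φ) ≥ √((n − d)/(d(n − 1))). -/
/-- The coherence of a family of vectors `Φ` in `𝕜^d`:
`μ(Φ) = max_{j ≠ k} |⟨φ_j, φ_k⟩|` (equal to the max over `j < k` by symmetry),
with the convention that the coherence of a single vector is `0`. -/
noncomputable def coherence {𝕜 : Type*} [RCLike 𝕜] {d n : ℕ}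
    (Φ : Fin n → EuclideanSpace 𝕜 (Fin d)) : ℝ :=
  ((Finset.univ.filter fun p : Fin n × Fin n => p.1 ≠ p.2).sup
    fun p => ‖(inner 𝕜 (Φ p.1) (Φ p.2) : 𝕜)‖₊ : NNReal)

/-! Write the vectors as the columns of a `d × n` matrix `A`. The Gram matrix `G = AᴴA` and the
frame operator `S = AAᴴ` have the same Frobenius norm, since `tr (G²) = tr (S²)`. As `S` is
`d × d` with trace `n`, Cauchy–Schwarz on its diagonal gives `n² ≤ d ‖S‖_F² = d ‖G‖_F²`; on the
other hand `G` has unit diagonal and off-diagonal entries of modulus at most `μ`, so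
`‖G‖_F² ≤ n (1 + (n - 1) μ²)`. Comparing the two bounds gives `μ² ≥ (n - d) / (d (n - 1))`. -/

open Finset Matrix Module
open scoped InnerProductSpace

namespace Matrix

variable {𝕜 m n : Type*} [RCLike 𝕜] [Fintype m] [Fintype n]

theorem re_trace_mul_conjTranspose_self (A : Matrix m n 𝕜) :
    RCLike.re (A * Aᴴ).trace = ∑ i, ∑ j, ‖A i j‖ ^ 2 := by
  simp only [trace, diag, mul_apply, conjTranspose_apply, RCLike.star_def, RCLike.mul_conj,
    map_sum]
  norm_cast

theorem sum_norm_sq_mul_conjTranspose_self_eq (A : Matrix m n 𝕜) :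
    ∑ i, ∑ j, ‖(A * Aᴴ) i j‖ ^ 2 = ∑ i, ∑ j, ‖(Aᴴ * A) i j‖ ^ 2 := by
  simp only [← re_trace_mul_conjTranspose_self, conjTranspose_mul, conjTranspose_conjTranspose]
  rw [Matrix.mul_assoc A, trace_mul_comm A]
  simp only [Matrix.mul_assoc]

theorem norm_trace_sq_le_card_mul_sum_norm_sq (A : Matrix n n 𝕜) :
    ‖A.trace‖ ^ 2 ≤ Fintype.card n * ∑ i, ∑ j, ‖A i j‖ ^ 2 :=
  calc ‖A.trace‖ ^ 2 ≤ (∑ i, ‖A i i‖) ^ 2 := by gcongr; exact norm_sum_le _ _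
    _ ≤ Fintype.card n * ∑ i, ‖A i i‖ ^ 2 := sq_sum_le_card_mul_sum_sq
    _ ≤ Fintype.card n * ∑ i, ∑ j, ‖A i j‖ ^ 2 := by
      gcongr with i
      exact single_le_sum (f := fun j => ‖A i j‖ ^ 2) (fun _ _ => by positivity) (mem_univ i)

end Matrix

section FramePotential

variable {𝕜 E ι : Type*} [RCLike 𝕜] [NormedAddCommGroup E] [InnerProductSpace 𝕜 E] [Fintype ι]

variable (𝕜) in
def framePotential (v : ι → E) : ℝ := ∑ k, ∑ l, ‖⟪v k, v l⟫_𝕜‖ ^ 2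

theorem re_trace_gram (v : ι → E) : RCLike.re (gram 𝕜 v).trace = ∑ k, ‖v k‖ ^ 2 := by
  simp [trace, gram]

theorem sq_sum_norm_sq_le_finrank_mul_framePotential [FiniteDimensional 𝕜 E] (v : ι → E) :
    (∑ k, ‖v k‖ ^ 2) ^ 2 ≤ finrank 𝕜 E * framePotential 𝕜 v := by
  let b := stdOrthonormalBasis 𝕜 E
  let A : Matrix (Fin (finrank 𝕜 E)) ι 𝕜 := of fun i k => b.repr (v k) i
  have hgram : gram 𝕜 v = Aᴴ * A := gram_eq_conjTranspose_mul b v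
  have htrace : ∑ k, ‖v k‖ ^ 2 ≤ ‖(A * Aᴴ).trace‖ := by
    rw [← re_trace_gram (𝕜 := 𝕜), hgram, trace_mul_comm]
    exact RCLike.re_le_norm _
  calc (∑ k, ‖v k‖ ^ 2) ^ 2 ≤ ‖(A * Aᴴ).trace‖ ^ 2 := by gcongr
    _ ≤ finrank 𝕜 E * ∑ i, ∑ j, ‖(A * Aᴴ) i j‖ ^ 2 := by
        simpa using norm_trace_sq_le_card_mul_sum_norm_sq (A * Aᴴ)
    _ = finrank 𝕜 E * framePotential 𝕜 v := by
        rw [sum_norm_sq_mul_conjTranspose_self_eq, ← hgram]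
        rfl

end FramePotential

section Coherence

variable {𝕜 : Type*} [RCLike 𝕜] {d n : ℕ}

theorem norm_inner_le_coherence (Φ : Fin n → EuclideanSpace 𝕜 (Fin d)) {k l : Fin n}
    (hkl : k ≠ l) : ‖⟪Φ k, Φ l⟫_𝕜‖ ≤ coherence Φ :=
  NNReal.coe_le_coe.mpr <| le_sup (f := fun p : Fin n × Fin n => ‖⟪Φ p.1, Φ p.2⟫_𝕜‖₊)
    (mem_filter.2 ⟨mem_univ (k, l), hkl⟩)

theorem framePotential_le_of_norm_eq_one (Φ : Fin n → EuclideanSpace 𝕜 (Fin d))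
    (hunit : ∀ k, ‖Φ k‖ = 1) :
    framePotential 𝕜 Φ ≤ n * (1 + (n - 1) * coherence Φ ^ 2) := by
  set μ := coherence Φ
  have hentry (k l : Fin n) :
      ‖⟪Φ k, Φ l⟫_𝕜‖ ^ 2 ≤ μ ^ 2 + if k = l then 1 - μ ^ 2 else 0 := by
    split_ifs with h
    · subst h
      simp [inner_self_eq_norm_sq_to_K, hunit]
    · simpa using pow_le_pow_left₀ (norm_nonneg _) (norm_inner_le_coherence Φ h) 2
  calc framePotential 𝕜 Φ ≤ ∑ k : Fin n, ∑ l : Fin n, (μ ^ 2 + if k = l then 1 - μ ^ 2 else 0) :=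
        sum_le_sum fun k _ => sum_le_sum fun l _ => hentry k l
    _ = n * (1 + (n - 1) * μ ^ 2) := by
        simp only [sum_add_distrib, sum_const, card_univ, Fintype.card_fin, nsmul_eq_mul,
          sum_ite_eq, mem_univ, if_true]
        ring

end Coherence

theorem welch_rankin_bound_general {𝕜 : Type*} [RCLike 𝕜] {d n : ℕ}
    (hn : d < n)
    (Φ : Fin n → EuclideanSpace 𝕜 (Fin d))
    (hunit : ∀ j, ‖Φ j‖ = 1) :
    Real.sqrt (((n : ℝ) - d) / (d * ((n : ℝ) - 1))) ≤ coherence Φ := by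
  set μ := coherence Φ
  have hlower : (n : ℝ) ^ 2 ≤ d * framePotential 𝕜 Φ := by
    simpa [hunit] using sq_sum_norm_sq_le_finrank_mul_framePotential (𝕜 := 𝕜) Φ
  have hupper := framePotential_le_of_norm_eq_one Φ hunit
  have hdn : (d : ℝ) + 1 ≤ n := by exact_mod_cast hn
  have hμ : 0 ≤ μ := NNReal.coe_nonneg _
  have hkey : (n : ℝ) - d ≤ μ ^ 2 * (d * (n - 1)) := by
    nlinarith [mul_le_mul_of_nonneg_left hupper (Nat.cast_nonneg (α := ℝ) d)]
  rw [Real.sqrt_le_left hμ]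
  exact div_le_of_le_mul₀ (by nlinarith) (by positivity) hkey

/-- Welch–Rankin bound: any `n > d ≥ 2` unit vectors in `𝔽^d` satisfy
`μ(Φ) ≥ √((n − d)/(d(n − 1)))`. -/
theorem welch_rankin_bound {𝕜 : Type*} [RCLike 𝕜] {d n : ℕ}
    (hd : 2 ≤ d) (hn : d < n)
    (Φ : Fin n → EuclideanSpace 𝕜 (Fin d))
    (hunit : ∀ j, ‖Φ j‖ = 1) :
    Real.sqrt (((n : ℝ) - d) / (d * ((n : ℝ) - 1))) ≤ coherence Φ :=
  welch_rankin_bound_general hn Φ hunit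
end

section
/- Let d, n be positive integers with n > d ≥ 2, and let Φ = (φ_1, …, φ_n) be a family of unit vectors in 𝔽^d (𝔽 = ℝ or ℂ). Then μ(Φ) = √((n − d)/(d(n − 1))) if and only if Φ is an equiangular tight frame, i.e., |⟨φ_j, φ_k⟩| is the same for all j ≠ k and Σ_j ⟨x, φ_j⟩ φ_j = (n/d) x for all x ∈ 𝔽^d. -/
open Finset Matrix

namespace Matrix

variable {𝕜 : Type*} [RCLike 𝕜] {m n : Type*} [Fintype m] [Fintype n]

theorem trace_conjTranspose_mul_self_eq_sum_norm_sq (M : Matrix m n 𝕜) :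
    (Mᴴ * M).trace = ((∑ i, ∑ j, ‖M i j‖ ^ 2 : ℝ) : 𝕜) := by
  rw [trace, Finset.sum_comm]
  push_cast
  simp [mul_apply, RCLike.conj_mul]

theorem sum_norm_sq_mul_conjTranspose_sub_smul_one [DecidableEq m] (A : Matrix m n 𝕜) (c : ℝ) :
    ∑ a, ∑ b, ‖(A * Aᴴ - (c : 𝕜) • 1 : Matrix m m 𝕜) a b‖ ^ 2 =
      ∑ j, ∑ k, ‖(Aᴴ * A) j k‖ ^ 2 - 2 * c * ∑ a, ∑ j, ‖A a j‖ ^ 2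
        + c ^ 2 * Fintype.card m := by
  set S := A * Aᴴ
  set G := Aᴴ * A
  have hS : Sᴴ = S := (isHermitian_mul_conjTranspose_self A).eq
  have hG : Gᴴ = G := (isHermitian_conjTranspose_mul_self A).eq
  have htrS : S.trace = G.trace := trace_mul_comm A Aᴴ
  have htrSS : (S * S).trace = (Gᴴ * G).trace := by
    rw [hG, show S * S = A * (Aᴴ * A * Aᴴ) by simp only [S, Matrix.mul_assoc],
      trace_mul_comm]
    simp only [G, Matrix.mul_assoc]
  have key : ((S - (c : 𝕜) • 1)ᴴ * (S - (c : 𝕜) • 1)).trace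
      = (Gᴴ * G).trace - 2 * c * (Aᴴ * A).trace + c ^ 2 * Fintype.card m := by
    rw [conjTranspose_sub, hS, conjTranspose_smul, conjTranspose_one, RCLike.star_def,
      RCLike.conj_ofReal]
    simp only [sub_mul, mul_sub, Matrix.smul_mul, Matrix.mul_smul, Matrix.one_mul,
      Matrix.mul_one, smul_smul, trace_sub, trace_smul, trace_one, htrSS, htrS, smul_eq_mul]
    ring
  simp only [trace_conjTranspose_mul_self_eq_sum_norm_sq] at key
  exact_mod_cast key

theorem sum_norm_sq_eq_zero_iff (M : Matrix m n 𝕜) :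
    ∑ i, ∑ j, ‖M i j‖ ^ 2 = 0 ↔ M = 0 := by
  have hnonneg : ∀ i, 0 ≤ ∑ j, ‖M i j‖ ^ 2 := fun i => by positivity
  simp only [sum_eq_zero_iff_of_nonneg fun i _ => hnonneg i, mem_univ, true_implies,
    sum_eq_zero_iff_of_nonneg fun j _ => sq_nonneg ‖M _ j‖, sq_eq_zero_iff, norm_eq_zero,
    ← Matrix.ext_iff, zero_apply]

end Matrix

section Frame

variable {𝕜 : Type*} [RCLike 𝕜] {ι m : Type*} [Fintype m]

def synthesisMatrix (Φ : ι → EuclideanSpace 𝕜 m) : Matrix m ι 𝕜 :=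
  Matrix.of fun a j => Φ j a

theorem conjTranspose_synthesisMatrix_mul_self (Φ : ι → EuclideanSpace 𝕜 m) :
    (synthesisMatrix Φ)ᴴ * synthesisMatrix Φ = gram 𝕜 Φ := by
  ext j k
  simp [synthesisMatrix, mul_apply, PiLp.inner_apply, mul_comm]

theorem sum_norm_sq_synthesisMatrix [Fintype ι] (Φ : ι → EuclideanSpace 𝕜 m) :
    ∑ a, ∑ j, ‖synthesisMatrix Φ a j‖ ^ 2 = ∑ j, ‖Φ j‖ ^ 2 := by
  simp [synthesisMatrix, EuclideanSpace.norm_sq_eq, Finset.sum_comm (γ := m)]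

theorem toEuclideanLin_synthesisMatrix_mul_conjTranspose [Fintype ι] [DecidableEq m]
    (Φ : ι → EuclideanSpace 𝕜 m) (x : EuclideanSpace 𝕜 m) :
    toEuclideanLin (synthesisMatrix Φ * (synthesisMatrix Φ)ᴴ) x = ∑ j, inner 𝕜 (Φ j) x • Φ j := by
  ext a
  simp only [synthesisMatrix, toLpLin_apply, mulVec, dotProduct, mul_apply, of_apply,
    conjTranspose_apply, RCLike.star_def, sum_mul, PiLp.inner_apply, RCLike.inner_apply,
    WithLp.ofLp_sum, WithLp.ofLp_smul, Finset.sum_apply, Pi.smul_apply, smul_eq_mul]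
  rw [Finset.sum_comm]
  exact sum_congr rfl fun _ _ => sum_congr rfl fun _ _ => by ring

theorem sum_inner_smul_eq_smul_iff [Fintype ι] [DecidableEq m] (Φ : ι → EuclideanSpace 𝕜 m)
    (c : 𝕜) :
    (∀ x, ∑ j, inner 𝕜 (Φ j) x • Φ j = c • x) ↔
      synthesisMatrix Φ * (synthesisMatrix Φ)ᴴ = c • 1 := by
  simp only [← toEuclideanLin_synthesisMatrix_mul_conjTranspose, ← toEuclideanLin.injective.eq_iff,
    LinearMap.ext_iff, map_smul, toLpLin_one, LinearMap.smul_apply, LinearMap.id_apply]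

theorem sum_offDiag_norm_inner_sq_eq [Fintype ι] [DecidableEq ι] [DecidableEq m]
    (Φ : ι → EuclideanSpace 𝕜 m) (hΦ : ∀ j, ‖Φ j‖ = 1) (c : ℝ) :
    ∑ p ∈ univ.offDiag, ‖inner 𝕜 (Φ p.1) (Φ p.2)‖ ^ 2 =
      ∑ a, ∑ b, ‖(synthesisMatrix Φ * (synthesisMatrix Φ)ᴴ - (c : 𝕜) • 1 : Matrix m m 𝕜) a b‖ ^ 2
        + (2 * c - 1) * Fintype.card ι - c ^ 2 * Fintype.card m := by
  have hsplit : ∑ j, ∑ k, ‖inner 𝕜 (Φ j) (Φ k)‖ ^ 2 =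
      Fintype.card ι + ∑ p ∈ univ.offDiag, ‖inner 𝕜 (Φ p.1) (Φ p.2)‖ ^ 2 := by
    rw [← Finset.sum_product', ← diag_union_offDiag,
      sum_union (disjoint_diag_offDiag _), sum_diag]
    simp [hΦ]
  rw [Matrix.sum_norm_sq_mul_conjTranspose_sub_smul_one, conjTranspose_synthesisMatrix_mul_self,
    sum_norm_sq_synthesisMatrix]
  simp only [gram_apply, hsplit, hΦ, one_pow, sum_const, card_univ, nsmul_eq_mul, mul_one]
  ring

end Frame

theorem sum_offDiag_norm_inner_sq_eq_add_welch {𝕜 : Type*} [RCLike 𝕜] {d n : ℕ}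
    (Φ : Fin n → EuclideanSpace 𝕜 (Fin d)) (hΦ : ∀ j, ‖Φ j‖ = 1) (hd : d ≠ 0) (hn : 1 < n) :
    ∑ p ∈ univ.offDiag, ‖inner 𝕜 (Φ p.1) (Φ p.2)‖ ^ 2 =
      ∑ a, ∑ b, ‖(synthesisMatrix Φ * (synthesisMatrix Φ)ᴴ - ((n / d : ℝ) : 𝕜) • 1 :
        Matrix (Fin d) (Fin d) 𝕜) a b‖ ^ 2
        + n * (n - 1) * (((n : ℝ) - d) / (d * ((n : ℝ) - 1))) := by
  have hd' : (d : ℝ) ≠ 0 := by exact_mod_cast hd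
  have hn' : (n : ℝ) - 1 ≠ 0 := sub_ne_zero.2 (by exact_mod_cast hn.ne')
  rw [sum_offDiag_norm_inner_sq_eq Φ hΦ (n / d), Fintype.card_fin, Fintype.card_fin]
  field_simp
  ring

theorem Finset.card_offDiag_univ_fin (n : ℕ) :
    ((univ : Finset (Fin n)).offDiag.card : ℝ) = n * (n - 1) := by
  rw [offDiag_card, card_univ, Fintype.card_fin, Nat.cast_sub (Nat.le_mul_self n)]
  push_cast
  ring

section Coherence

variable {𝕜 : Type*} [RCLike 𝕜] {d n : ℕ} (Φ : Fin n → EuclideanSpace 𝕜 (Fin d))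

theorem coherence_nonneg : 0 ≤ coherence Φ := NNReal.coe_nonneg _

theorem norm_inner_le_coherence_s3 {j k : Fin n} (hjk : j ≠ k) :
    ‖inner 𝕜 (Φ j) (Φ k)‖ ≤ coherence Φ := by
  have := le_sup (f := fun p : Fin n × Fin n => ‖inner 𝕜 (Φ p.1) (Φ p.2)‖₊)
    (mem_filter.2 ⟨mem_univ (j, k), hjk⟩ : (j, k) ∈ univ.filter fun p : Fin n × Fin n => p.1 ≠ p.2)
  exact_mod_cast this

theorem coherence_eq_of_forall_norm_inner_eq (hn : 1 < n) {c : ℝ}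
    (hc : ∀ j k, j ≠ k → ‖inner 𝕜 (Φ j) (Φ k)‖ = c) : coherence Φ = c := by
  have hne : (univ.filter fun p : Fin n × Fin n => p.1 ≠ p.2).Nonempty :=
    ⟨(⟨0, by omega⟩, ⟨1, hn⟩), by simp [Fin.ext_iff]⟩
  obtain ⟨p, hp, hsup⟩ := exists_mem_eq_sup _ hne
    fun p : Fin n × Fin n => ‖inner 𝕜 (Φ p.1) (Φ p.2)‖₊
  rw [coherence, hsup, coe_nnnorm]
  exact hc _ _ (mem_filter.1 hp).2

theorem sum_offDiag_norm_inner_sq_le_coherence_sq :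
    ∑ p ∈ univ.offDiag, ‖inner 𝕜 (Φ p.1) (Φ p.2)‖ ^ 2 ≤ n * (n - 1) * coherence Φ ^ 2 := by
  calc ∑ p ∈ univ.offDiag, ‖inner 𝕜 (Φ p.1) (Φ p.2)‖ ^ 2
      ≤ ∑ _p ∈ univ.offDiag, coherence Φ ^ 2 :=
        sum_le_sum fun p hp => pow_le_pow_left₀ (norm_nonneg _)
          (norm_inner_le_coherence_s3 Φ (mem_offDiag.1 hp).2.2) 2
    _ = n * (n - 1) * coherence Φ ^ 2 := by
        rw [sum_const, nsmul_eq_mul, card_offDiag_univ_fin]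

theorem sum_offDiag_norm_inner_sq_eq_iff :
    ∑ p ∈ univ.offDiag, ‖inner 𝕜 (Φ p.1) (Φ p.2)‖ ^ 2 = n * (n - 1) * coherence Φ ^ 2 ↔
      ∀ j k, j ≠ k → ‖inner 𝕜 (Φ j) (Φ k)‖ = coherence Φ := by
  rw [← card_offDiag_univ_fin, ← nsmul_eq_mul, ← sum_const, sum_eq_sum_iff_of_le fun p hp =>
    pow_le_pow_left₀ (norm_nonneg _) (norm_inner_le_coherence_s3 Φ (mem_offDiag.1 hp).2.2) 2]
  simp only [mem_offDiag, mem_univ, true_and, sq_eq_sq₀ (norm_nonneg _) (coherence_nonneg Φ),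
    Prod.forall]

end Coherence

/-- Equality in the Welch–Rankin bound holds if and only if `Φ` is an
equiangular tight frame. -/
theorem welch_rankin_equality_iff_etf {𝕜 : Type*} [RCLike 𝕜] {d n : ℕ}
    (hd : 2 ≤ d) (hn : d < n)
    (Φ : Fin n → EuclideanSpace 𝕜 (Fin d))
    (hunit : ∀ j, ‖Φ j‖ = 1) :
    coherence Φ = Real.sqrt (((n : ℝ) - d) / (d * ((n : ℝ) - 1))) ↔
      ((∃ c : ℝ, ∀ j k, j ≠ k → ‖(inner 𝕜 (Φ j) (Φ k) : 𝕜)‖ = c) ∧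
        ∀ x : EuclideanSpace 𝕜 (Fin d),
          ∑ j, (inner 𝕜 (Φ j) x : 𝕜) • Φ j = ((n : 𝕜) / (d : 𝕜)) • x) := by
  have hOD := sum_offDiag_norm_inner_sq_eq_add_welch Φ hunit (by omega) (by omega)
  have hnd : (d : ℝ) < n := by exact_mod_cast hn
  have hn1 : (1 : ℝ) < n := by linarith [show (2 : ℝ) ≤ d by exact_mod_cast hd]
  set W := ((n : ℝ) - d) / (d * ((n : ℝ) - 1))
  have hW0 : 0 ≤ W := div_nonneg (by linarith) (mul_nonneg (by positivity) (by linarith))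
  set D := ∑ a, ∑ b, ‖(synthesisMatrix Φ * (synthesisMatrix Φ)ᴴ - ((n / d : ℝ) : 𝕜) • 1 :
    Matrix (Fin d) (Fin d) 𝕜) a b‖ ^ 2
  have htight : (∀ x, ∑ j, inner 𝕜 (Φ j) x • Φ j = ((n : 𝕜) / (d : 𝕜)) • x) ↔ D = 0 := by
    rw [Matrix.sum_norm_sq_eq_zero_iff, sub_eq_zero, sum_inner_smul_eq_smul_iff]
    push_cast
    rfl
  constructor
  · intro hμ
    have hμW : coherence Φ ^ 2 = W := by rw [hμ, Real.sq_sqrt hW0]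
    have hO := sum_offDiag_norm_inner_sq_le_coherence_sq Φ
    rw [hμW, hOD] at hO
    have hD : D = 0 := le_antisymm (by linarith) (by positivity)
    refine ⟨⟨coherence Φ, (sum_offDiag_norm_inner_sq_eq_iff Φ).1 ?_⟩, htight.2 hD⟩
    rw [hOD, hD, hμW, zero_add]
  · rintro ⟨⟨c, hc⟩, hframe⟩
    have hμc := coherence_eq_of_forall_norm_inner_eq Φ (by omega) hc
    have hO := (sum_offDiag_norm_inner_sq_eq_iff Φ).2 fun j k h => (hc j k h).trans hμc.symm
    rw [hOD, htight.1 hframe, zero_add] at hO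
    have hμW : coherence Φ ^ 2 = W := (mul_left_cancel₀ (by positivity) hO).symm
    rw [← hμW, Real.sqrt_sq (coherence_nonneg Φ)]
end

section
/- (Levenstein bound, real case) Let d, n be positive integers with d ≥ 2 and n > d(d+1)/2, and let Φ = (φ_1, …, φ_n) be any family of unit vectors in ℝ^d. Then μ(Φ) ≥ √((3n − d(d+2))/((n − d)(d + 2))). -/
/-!
With `s i j = ⟪φ i, φ j⟫`, the kernels `t ^ 2 - 1 / d` and `t ^ 4 - 3 t ^ 2 / (d + 2)` are, on unit
vectors, Gram kernels of explicit tensor features (`x ⊗ x` corrected by a multiple of `δ`, and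
`x ⊗ x ⊗ x ⊗ x` corrected by a multiple of the symmetrisation of `δ ⊗ x ⊗ x`), so `∑ s i j ^ 2 ≥ n ^ 2 / d` and `∑ s i j ^ 4 ≥ 3 / (d + 2) ∑ s i j ^ 2`.
Off the diagonal `s i j ^ 2 ≤ μ ^ 2`, whence `∑ s i j ^ 4 ≤ n (1 - μ ^ 2) + μ ^ 2 ∑ s i j ^ 2`.
where `μ` is the coherence. Eliminating the two moments from these three inequalities bounds
`μ ^ 2` from below.
-/

open Finset Matrix

theorem sum_sum_dotProduct_nonneg {ι α : Type*} [Fintype ι] [Fintype α] (F : ι → α → ℝ) :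
    0 ≤ ∑ i, ∑ j, F i ⬝ᵥ F j := by
  simp only [← dotProduct_sum, ← sum_dotProduct]
  exact dotProduct_self_star_nonneg _

section Features

variable {R κ ι : Type*} [CommSemiring R] [Fintype κ] [Fintype ι]

def vecTensor (u : κ → R) (v : ι → R) : κ × ι → R := fun p => u p.1 * v p.2

local infixr:70 " ⊗ᵥ " => vecTensor

theorem vecTensor_dotProduct (u u' : κ → R) (v v' : ι → R) :
    (u ⊗ᵥ v) ⬝ᵥ (u' ⊗ᵥ v') = (u ⬝ᵥ u') * (v ⬝ᵥ v') := by
  simp only [dotProduct, Fintype.sum_prod_type, vecTensor, sum_mul_sum]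
  exact sum_congr rfl fun _ _ => sum_congr rfl fun _ _ => by ring

variable [DecidableEq κ]

noncomputable def quadraticFeature (β : ℝ) (x : κ → ℝ) : κ × κ → ℝ :=
  x ⊗ᵥ x - β • ∑ k, Pi.single k 1 ⊗ᵥ Pi.single k 1

noncomputable def quarticFeature (α : ℝ) (x : κ → ℝ) : κ × κ × κ × κ → ℝ :=
  x ⊗ᵥ x ⊗ᵥ x ⊗ᵥ x - α • ∑ k, (Pi.single k 1 ⊗ᵥ Pi.single k 1 ⊗ᵥ x ⊗ᵥ x
    + Pi.single k 1 ⊗ᵥ x ⊗ᵥ Pi.single k 1 ⊗ᵥ x + Pi.single k 1 ⊗ᵥ x ⊗ᵥ x ⊗ᵥ Pi.single k 1)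

theorem quadraticFeature_dotProduct (β : ℝ) (x y : κ → ℝ) :
    quadraticFeature β x ⬝ᵥ quadraticFeature β y =
      (x ⬝ᵥ y) ^ 2 - β * (x ⬝ᵥ x + y ⬝ᵥ y) + Fintype.card κ * β ^ 2 := by
  simp only [quadraticFeature, sub_dotProduct, dotProduct_sub, smul_dotProduct, dotProduct_smul,
    sum_dotProduct, dotProduct_sum, vecTensor_dotProduct, single_dotProduct, dotProduct_single]
  simp only [Pi.single_apply, mul_one, one_mul, ite_mul, zero_mul, sum_ite_eq, mem_univ, if_true,
    smul_eq_mul]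
  simp only [dotProduct, mul_sub, sum_sub_distrib, sum_const, card_univ, nsmul_eq_mul]
  ring

theorem quarticFeature_dotProduct (α : ℝ) (x y : κ → ℝ) :
    quarticFeature α x ⬝ᵥ quarticFeature α y =
      (x ⬝ᵥ y) ^ 4 - 3 * α * (x ⬝ᵥ x + y ⬝ᵥ y) * (x ⬝ᵥ y) ^ 2
        + 3 * (Fintype.card κ + 2) * α ^ 2 * (x ⬝ᵥ y) ^ 2 := by
  simp only [quarticFeature, sub_dotProduct, dotProduct_sub, add_dotProduct, dotProduct_add,
    smul_dotProduct, dotProduct_smul, sum_dotProduct, dotProduct_sum, vecTensor_dotProduct,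
    single_dotProduct, dotProduct_single, sum_add_distrib]
  simp only [Pi.single_apply, mul_one, one_mul, ite_mul, zero_mul, sum_ite_eq, mem_univ, if_true]
  -- move the constant `x ⬝ᵥ y` to the right of every summand, so that `← sum_mul` pulls it out
  simp only [smul_eq_mul, mul_sub, mul_add, sum_sub_distrib, sum_add_distrib, ← mul_assoc]
  simp only [mul_right_comm _ (x ⬝ᵥ y)]
  simp only [← sum_mul, mul_assoc α, ← mul_sum, sum_const, card_univ, nsmul_eq_mul]
  have hyx : ∑ i, y i * x i = ∑ i, x i * y i := sum_congr rfl fun _ _ => mul_comm _ _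
  simp only [dotProduct, hyx]
  ring

end Features

section GramSums

variable {ι κ : Type*} [Fintype ι] [Fintype κ]

theorem card_sq_le_card_mul_sum_sum_sq_dotProduct (φ : ι → κ → ℝ) (hφ : ∀ i, φ i ⬝ᵥ φ i = 1) :
    (Fintype.card ι : ℝ) ^ 2 ≤ Fintype.card κ * ∑ i, ∑ j, (φ i ⬝ᵥ φ j) ^ 2 := by
  classical
  rcases isEmpty_or_nonempty ι with hι | ⟨⟨i₀⟩⟩
  · simp
  have hκ : (0 : ℝ) < Fintype.card κ := by
    have : Nonempty κ := by
      by_contra h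
      simpa [not_nonempty_iff.mp h, dotProduct] using hφ i₀
    exact_mod_cast Fintype.card_pos
  have h := sum_sum_dotProduct_nonneg fun i => quadraticFeature (Fintype.card κ : ℝ)⁻¹ (φ i)
  simp only [quadraticFeature_dotProduct, hφ, sum_add_distrib, sum_sub_distrib, sum_const,
    card_univ, nsmul_eq_mul] at h
  field_simp at h
  nlinarith

theorem three_mul_sum_sum_sq_dotProduct_le (φ : ι → κ → ℝ) (hφ : ∀ i, φ i ⬝ᵥ φ i = 1) :
    3 * ∑ i, ∑ j, (φ i ⬝ᵥ φ j) ^ 2 ≤ (Fintype.card κ + 2) * ∑ i, ∑ j, (φ i ⬝ᵥ φ j) ^ 4 := by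
  classical
  have h := sum_sum_dotProduct_nonneg fun i => quarticFeature (Fintype.card κ + 2 : ℝ)⁻¹ (φ i)
  simp only [quarticFeature_dotProduct, hφ, sum_add_distrib, sum_sub_distrib, ← mul_sum] at h
  field_simp at h
  nlinarith

end GramSums

theorem sum_sum_pow_four_le {ι : Type*} [Fintype ι] (s : ι → ι → ℝ) {t : ℝ}
    (hdiag : ∀ i, s i i = 1) (hoff : ∀ i j, i ≠ j → s i j ^ 2 ≤ t) :
    ∑ i, ∑ j, s i j ^ 4 ≤ Fintype.card ι * (1 - t) + t * ∑ i, ∑ j, s i j ^ 2 := by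
  classical
  have hterm : ∀ i j, s i j ^ 4 - t * s i j ^ 2 ≤ if i = j then 1 - t else 0 := by
    intro i j
    split_ifs with hij
    · simp [hij, hdiag]
    · nlinarith [hoff i j hij, sq_nonneg (s i j)]
  calc ∑ i, ∑ j, s i j ^ 4 = ∑ i, ∑ j, (s i j ^ 4 - t * s i j ^ 2) + t * ∑ i, ∑ j, s i j ^ 2 := by
        simp only [sum_sub_distrib, mul_sum, sub_add_cancel]
    _ ≤ ∑ i, ∑ j, (if i = j then 1 - t else 0) + t * ∑ i, ∑ j, s i j ^ 2 := by
        gcongr with i _ j _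
        exact hterm i j
    _ = Fintype.card ι * (1 - t) + t * ∑ i, ∑ j, s i j ^ 2 := by simp [mul_one_sub]

theorem levenstein_bound_of_moments {d n : ℕ} {t M₂ M₄ : ℝ} (hdn : d < n)
    (hA : (n : ℝ) ^ 2 ≤ d * M₂) (hB : 3 * M₂ ≤ (d + 2) * M₄) (hC : M₄ ≤ n * (1 - t) + t * M₂) :
    (3 * (n : ℝ) - d * ((d : ℝ) + 2)) / (((n : ℝ) - d) * ((d : ℝ) + 2)) ≤ t := by
  have hdn' : (d : ℝ) < n := by exact_mod_cast hdn
  have hd : (0 : ℝ) ≤ d := d.cast_nonneg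
  have hdd : (d : ℝ) ≤ d ^ 2 := by
    rcases d.eq_zero_or_pos with rfl | h
    · simp
    · nlinarith [(Nat.one_le_cast (α := ℝ)).mpr h]
  rw [div_le_iff₀ (by positivity)]
  rcases le_or_gt 3 ((d + 2) * t) with ht | ht
  · nlinarith
  · have hM₂ : (3 - (d + 2) * t) * M₂ ≤ (d + 2) * n * (1 - t) := by nlinarith
    have key : (3 - (d + 2) * t) * n ^ 2 ≤ d * (d + 2) * n * (1 - t) := by
      nlinarith [mul_le_mul_of_nonneg_left hA (by linarith : (0 : ℝ) ≤ 3 - (d + 2) * t),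
        mul_le_mul_of_nonneg_left hM₂ hd]
    nlinarith

theorem norm_inner_le_coherence_s10 {𝕜 : Type*} [RCLike 𝕜] {d n : ℕ}
    (Φ : Fin n → EuclideanSpace 𝕜 (Fin d)) {i j : Fin n} (hij : i ≠ j) :
    ‖(inner 𝕜 (Φ i) (Φ j) : 𝕜)‖ ≤ coherence Φ := by
  have hmem : (i, j) ∈ univ.filter fun p : Fin n × Fin n => p.1 ≠ p.2 :=
    mem_filter.mpr ⟨mem_univ _, hij⟩
  exact_mod_cast le_sup (f := fun p : Fin n × Fin n => ‖(inner 𝕜 (Φ p.1) (Φ p.2) : 𝕜)‖₊) hmem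

theorem levenstein_bound_real_general {d n : ℕ} (hn : d * (d + 1) / 2 < n)
    (Φ : Fin n → EuclideanSpace ℝ (Fin d))
    (hunit : ∀ j, ‖Φ j‖ = 1) :
    Real.sqrt ((3 * (n : ℝ) - d * ((d : ℝ) + 2)) / (((n : ℝ) - d) * ((d : ℝ) + 2)))
      ≤ coherence Φ := by
  have hdn : d < n := by
    refine lt_of_le_of_lt ((Nat.le_div_iff_mul_le two_pos).mpr ?_) hn
    rcases d with _ | d
    · simp
    · nlinarith
  let φ : Fin n → Fin d → ℝ := fun i => (Φ i).ofLp
  have hinner : ∀ i j, (inner ℝ (Φ i) (Φ j) : ℝ) = φ i ⬝ᵥ φ j := fun i j => by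
    simp [φ, EuclideanSpace.inner_eq_star_dotProduct, dotProduct_comm]
  have hφ : ∀ i, φ i ⬝ᵥ φ i = 1 := fun i => by
    rw [← hinner, real_inner_self_eq_norm_sq, hunit, one_pow]
  have hoff : ∀ i j, i ≠ j → (φ i ⬝ᵥ φ j) ^ 2 ≤ coherence Φ ^ 2 := fun i j hij => by
    rw [← hinner, ← sq_abs, ← Real.norm_eq_abs]
    exact pow_le_pow_left₀ (norm_nonneg _) (norm_inner_le_coherence_s10 Φ hij) 2
  have hμ : 0 ≤ coherence Φ := NNReal.coe_nonneg _
  rw [Real.sqrt_le_left hμ]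
  have hA := card_sq_le_card_mul_sum_sum_sq_dotProduct φ hφ
  have hB := three_mul_sum_sum_sq_dotProduct_le φ hφ
  have hC := sum_sum_pow_four_le (fun i j => φ i ⬝ᵥ φ j) hφ hoff
  simp only [Fintype.card_fin] at hA hB hC
  exact levenstein_bound_of_moments hdn hA hB hC

/-- Levenstein bound, real case: any `n > d(d+1)/2` unit vectors in `ℝ^d`
(`d ≥ 2`) satisfy `μ(Φ) ≥ √((3n − d(d+2))/((n − d)(d + 2)))`. -/
theorem levenstein_bound_real {d n : ℕ} (hd : 2 ≤ d) (hn : d * (d + 1) / 2 < n)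
    (Φ : Fin n → EuclideanSpace ℝ (Fin d))
    (hunit : ∀ j, ‖Φ j‖ = 1) :
    Real.sqrt ((3 * (n : ℝ) - d * ((d : ℝ) + 2)) / (((n : ℝ) - d) * ((d : ℝ) + 2)))
      ≤ coherence Φ :=
  levenstein_bound_real_general hn Φ hunit
end
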